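/- A normally finitely generated normal subgroup N of a group G is R-invisible if and only if (N/[G,N]) ⊗_Z R = 0. -/

import Mathlib

open scoped TensorProduct

/-- The set of denominators of (reduced fractional expressions of) elements of `R ⊆ ℚ`. -/
def DR (R : Subring ℚ) : Set ℕ := {d | ∃ q ∈ R, q.den = d}

variable {G H A : Type*} [Group G] [Group H] [Group A]

/-- Evaluation of a monomial over `G` in `n` indeterminates at a tuple of elements of `G`. -/
noncomputable def evalWord {n : ℕ} (g : Fin n → G) :
    Monoid.Coprod G (FreeGroup (Fin n)) →* G :=
  Monoid.Coprod.lift (MonoidHom.id G) (FreeGroup.lift g)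

/-- The projection `G * F → F → F/[F,F]`. -/
noncomputable def toFreeAb (G : Type*) [Group G] (n : ℕ) :
    Monoid.Coprod G (FreeGroup (Fin n)) →* Abelianization (FreeGroup (Fin n)) :=
  Monoid.Coprod.lift 1 Abelianization.of

/-- An `R`-nullhomologous system of equations `xᵢ^e = wᵢ(x₁,…,xₙ)` over `G`. -/
structure NullSys (R : Subring ℚ) (G : Type*) [Group G] where
  n : ℕ
  e : ℕ
  he : e ∈ DR R
  w : Fin n → Monoid.Coprod G (FreeGroup (Fin n))
  nullh : ∀ i, toFreeAb G n (w i) = 1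

/-- A solution of a system of equations over `G`. -/
def NullSys.IsSolution {R : Subring ℚ} (S : NullSys R G) (g : Fin S.n → G) : Prop :=
  ∀ i, (g i) ^ S.e = evalWord g (S.w i)

/-- A group is `R`-closed if every `R`-nullhomologous system over it has a unique solution. -/
def IsRClosed (R : Subring ℚ) (A : Type*) [Group A] : Prop :=
  ∀ S : NullSys R A, ∃! g : Fin S.n → A, S.IsSolution g

/-- A normal subgroup `N ≤ G` is `R`-invisible if it is normally finitely generated and every
element of `N/[G,N]` has (finite) order lying in `D_R`. -/
def IsRInvisible (R : Subring ℚ) {G : Type*} [Group G] (N : Subgroup G) : Prop :=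
  N.Normal ∧
  (∃ s : Finset G, ↑s ⊆ (N : Set G) ∧ Subgroup.normalClosure ↑s = N) ∧
  ∀ x ∈ N, ∃ e ∈ DR R, x ^ e ∈ ⁅(⊤ : Subgroup G), N⁆

/-- The quotient `N/[G,N]` of a normal subgroup `N ≤ G`. -/
abbrev commQuot {G : Type*} [Group G] (N : Subgroup G) [N.Normal] : Type _ :=
  ↥N ⧸ ((⁅(⊤ : Subgroup G), N⁆).subgroupOf N)

noncomputable instance commQuotCommGroup {G : Type*} [Group G] (N : Subgroup G) [N.Normal] :
    CommGroup (commQuot N) :=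
  { (inferInstance : Group (commQuot N)) with
    mul_comm := by
      intro a b
      induction a using QuotientGroup.induction_on with
      | H x =>
      induction b using QuotientGroup.induction_on with
      | H y =>
      rw [← QuotientGroup.mk_mul, ← QuotientGroup.mk_mul, QuotientGroup.eq]
      rw [Subgroup.mem_subgroupOf]
      open scoped commutatorElement in
      have : (((x * y)⁻¹ * (y * x) : ↥N) : G) = ⁅((y : G))⁻¹, ((x : G))⁻¹⁆ := by
        simp [commutatorElement_def, mul_assoc]
      rw [this]
      exact Subgroup.commutator_mem_commutator (Subgroup.mem_top _) (N.inv_mem x.2) }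

/-!
Every subring `R` of `ℚ` is the localization of `ℤ` at its set of denominators `D_R`: by Bézout,
the denominator of any `q ∈ R` is invertible in `R`. For a localization `S⁻¹ℤ`, the module
`M ⊗ S⁻¹ℤ` vanishes exactly when every element of `M` is killed by some `s ∈ S`. Applied to
`M = N/[G,N]` this is the torsion condition in the definition of `R`-invisibility.
-/

lemma inv_den_mem_of_mem {R : Subring ℚ} {q : ℚ} (hq : q ∈ R) : (q.den : ℚ)⁻¹ ∈ R := by
  obtain ⟨u, v, huv⟩ : IsCoprime q.num (q.den : ℤ) := Int.isCoprime_iff_gcd_eq_one.mpr q.reduced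
  have hinv : (q.den : ℚ)⁻¹ = u * q + v := by
    have hnum : q * q.den = q.num := Rat.mul_den_eq_num q
    have hbezout : (u * q.num + v * q.den : ℚ) = 1 := by exact_mod_cast huv
    have hden : (q.den : ℚ) ≠ 0 := by positivity
    field_simp
    linear_combination -hbezout - u * hnum
  rw [hinv]
  exact add_mem (mul_mem (intCast_mem R u) hq) (intCast_mem R v)

lemma mem_DR_iff {R : Subring ℚ} {e : ℕ} : e ∈ DR R ↔ 0 < e ∧ (e : ℚ)⁻¹ ∈ R := by
  constructor
  · rintro ⟨q, hq, rfl⟩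
    exact ⟨q.pos, inv_den_mem_of_mem hq⟩
  · rintro ⟨he, hinv⟩
    exact ⟨(e : ℚ)⁻¹, hinv, Rat.inv_natCast_den_of_pos he⟩

def denominators (R : Subring ℚ) : Submonoid ℕ where
  carrier := DR R
  one_mem' := ⟨1, R.one_mem, rfl⟩
  mul_mem' := by
    simp only [mem_DR_iff, Nat.cast_mul, mul_inv]
    rintro a b ⟨ha, ha'⟩ ⟨hb, hb'⟩
    exact ⟨Nat.mul_pos ha hb, mul_mem ha' hb'⟩

lemma isLocalization_denominators (R : Subring ℚ) :
    IsLocalization ((denominators R).map (Nat.castRingHom ℤ)) R where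
  map_units := by
    rintro ⟨_, e, he, rfl⟩
    obtain ⟨hpos, hinv⟩ := mem_DR_iff.mp he
    refine isUnit_iff_exists_inv.mpr ⟨⟨(e : ℚ)⁻¹, hinv⟩, Subtype.ext ?_⟩
    simp [hpos.ne']
  surj z := ⟨((z : ℚ).num, ⟨_, Submonoid.mem_map_of_mem _ ⟨z, z.2, rfl⟩⟩), Subtype.ext (by
    simp [Rat.mul_den_eq_num])⟩
  exists_of_eq {a b} h := ⟨1, by simpa using h⟩

lemma subsingleton_tensorProduct_iff_forall_exists_smul_eq_zero {A B : Type*} [CommRing A]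
    [CommRing B] [Algebra A B]
    (S : Submonoid A) [IsLocalization S B] (M : Type*) [AddCommGroup M] [Module A M] :
    Subsingleton (M ⊗[A] B) ↔ ∀ m : M, ∃ s ∈ S, s • m = 0 := by
  rw [(TensorProduct.comm A M B).toEquiv.subsingleton_congr]
  exact IsLocalizedModule.subsingleton_iff S (TensorProduct.mk A B M 1)

lemma commQuot_mk_eq_one_iff {G : Type*} [Group G] {N : Subgroup G} [N.Normal] (y : N) :
    (y : commQuot N) = 1 ↔ (y : G) ∈ ⁅(⊤ : Subgroup G), N⁆ := by
  rw [QuotientGroup.eq_one_iff, Subgroup.mem_subgroupOf]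

lemma forall_exists_smul_commQuot_eq_zero_iff {G : Type*} [Group G] {N : Subgroup G} [N.Normal]
    (S : Submonoid ℕ) :
    (∀ m : Additive (commQuot N), ∃ s ∈ S.map (Nat.castRingHom ℤ), s • m = 0) ↔
      ∀ x ∈ N, ∃ e ∈ S, x ^ e ∈ ⁅(⊤ : Subgroup G), N⁆ := by
  simp only [Submonoid.mem_map, exists_exists_and_eq_and, eq_natCast, natCast_zsmul,
    Additive.forall, ← ofMul_pow, ofMul_eq_zero, QuotientGroup.forall_mk, ← QuotientGroup.mk_pow,
    commQuot_mk_eq_one_iff, Subgroup.coe_pow, Subtype.forall]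

/-- A normally finitely generated normal subgroup `N ≤ G` is `R`-invisible if and only if
`(N/[G,N]) ⊗_ℤ R = 0`. -/
theorem isRInvisible_iff_tensor_eq_zero (R : Subring ℚ) {G : Type*} [Group G]
    (N : Subgroup G) [N.Normal]
    (hfg : ∃ s : Finset G, ↑s ⊆ (N : Set G) ∧ Subgroup.normalClosure ↑s = N) :
    IsRInvisible R N ↔ Subsingleton (Additive (commQuot N) ⊗[ℤ] R) := by
  have := isLocalization_denominators R
  rw [subsingleton_tensorProduct_iff_forall_exists_smul_eq_zero
    ((denominators R).map (Nat.castRingHom ℤ)), forall_exists_smul_commQuot_eq_zero_iff]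
  exact ⟨fun h ↦ h.2.2, fun h ↦ ⟨‹_›, hfg, h⟩⟩
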